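/- Let K be a field of characteristic p > 0. Consider the K-algebra homomorphism σ : K[T] → K[T] determined by σ(T) = T^p − T. Then K[T], regarded as an algebra over K[T] via σ, is a free module of rank p, and this algebra is étale over K[T] (that is, it is of finite presentation, flat, and formally étale). -/

import Mathlib

noncomputable section AS9

open Polynomial

namespace AS9

/-- The target copy of `K[T]`, regarded as algebra over `K[T]` via `T ↦ T^p - T`. -/
def Target (K : Type) [Field K] (p : ℕ) : Type := Polynomial K

variable (K : Type) [Field K] (p : ℕ)

instance : CommRing (Target K p) := inferInstanceAs (CommRing (Polynomial K))

instance : Algebra (Polynomial K) (Target K p) :=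
  show Algebra (Polynomial K) (Polynomial K) from
    ((Polynomial.aeval (R := K) (A := Polynomial K)
      (Polynomial.X ^ p - Polynomial.X)).toRingHom).toAlgebra

/-- Identity ring equiv between `K[T]` and the target copy. -/
def toT : Polynomial K ≃+* Target K p := RingEquiv.refl (Polynomial K)

lemma algebraMap_apply (a : Polynomial K) :
    algebraMap (Polynomial K) (Target K p) a = toT K p (aeval (X ^ p - X) a) := rfl

/-- The Artin–Schreier polynomial `X^p - X - T` over `K[T]`. -/
def q : (Polynomial K)[X] := X ^ p - X - C Polynomial.X

variable {K p}

lemma q_eq : q K p = X ^ p - (X + C Polynomial.X) := by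
  rw [q, sub_sub]

lemma deg_lin (hp : 1 < p) :
    ((X : (Polynomial K)[X]) + C Polynomial.X).degree < ((X : (Polynomial K)[X]) ^ p).degree := by
  refine lt_of_le_of_lt (degree_add_le _ _) ?_
  rw [degree_X, degree_C X_ne_zero, degree_X_pow]
  simp only [max_eq_left (by norm_num : (0 : WithBot ℕ) ≤ 1)]
  exact_mod_cast hp

lemma q_monic (hp : 1 < p) : (q K p).Monic := by
  rw [q_eq]
  exact monic_X_pow_sub (by simpa [degree_X_pow] using deg_lin (K := K) hp)

lemma q_natDegree (hp : 1 < p) : (q K p).natDegree = p := by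
  rw [q_eq]
  have h := degree_sub_eq_left_of_degree_lt (deg_lin (K := K) hp)
  rw [degree_X_pow] at h
  exact natDegree_eq_of_degree_eq_some h


variable (K p)

/-- `f = X^p - X` in `K[T]`. -/
def srcf : Polynomial K := X ^ p - X

variable {K p}

lemma srcf_deg_lt (hp : 1 < p) : (X : Polynomial K).degree < ((X : Polynomial K) ^ p).degree := by
  rw [degree_X, degree_X_pow]; exact_mod_cast hp

lemma srcf_monic (hp : 1 < p) : (srcf K p).Monic :=
  monic_X_pow_sub (by simpa [degree_X_pow] using srcf_deg_lt (K := K) hp)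

lemma srcf_natDegree (hp : 1 < p) : (srcf K p).natDegree = p := by
  have h := degree_sub_eq_left_of_degree_lt (srcf_deg_lt (K := K) (p := p) hp)
  rw [degree_X_pow] at h
  exact natDegree_eq_of_degree_eq_some h

/-- `σ : K[T] → K[T]`, `a ↦ a(T^p - T)`. -/
def sig (K : Type) [Field K] (p : ℕ) : Polynomial K →+* Polynomial K := (Polynomial.aeval (R := K) (srcf K p)).toRingHom

lemma sig_apply (a : Polynomial K) : sig K p a = a.comp (srcf K p) := by
  simp [sig, Polynomial.comp, aeval_def, Polynomial.algebraMap_eq]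

lemma sig_natDegree (hp : 1 < p) (a : Polynomial K) :
    (sig K p a).natDegree = a.natDegree * p := by
  rw [sig_apply, natDegree_comp, srcf_natDegree hp]

lemma sig_leadingCoeff (hp : 1 < p) (a : Polynomial K) :
    (sig K p a).leadingCoeff = a.leadingCoeff := by
  rw [sig_apply, leadingCoeff_comp (by rw [srcf_natDegree hp]; omega),
    (srcf_monic hp).leadingCoeff, one_pow, mul_one]

lemma sig_ne_zero (hp : 1 < p) {a : Polynomial K} (ha : a ≠ 0) : sig K p a ≠ 0 := by
  intro h
  apply leadingCoeff_ne_zero.mpr ha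
  rw [← sig_leadingCoeff hp, h, leadingCoeff_zero]

/-- Key injectivity: a polynomial of degree `< p` evaluating to zero under
`g ↦ g(σ; T)` is zero. -/
lemma key (hp : 1 < p) (r : (Polynomial K)[X]) (hr : r.natDegree < p)
    (h : eval₂ (sig K p) Polynomial.X r = 0) : r = 0 := by
  by_contra hr0
  set d : ℕ → ℕ := fun i => i + (r.coeff i).natDegree * p with hd
  have hsupp : r.support.Nonempty := nonempty_support_iff.mpr hr0
  obtain ⟨i₀, hi₀, hmax⟩ := r.support.exists_max_image d hsupp
  have hlt : ∀ i ∈ r.support, i < p := fun i hi =>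
    lt_of_le_of_lt (le_natDegree_of_mem_supp i hi) hr
  have hterm : ∀ i ∈ r.support,
      (sig K p (r.coeff i) * Polynomial.X ^ i).natDegree = d i := by
    intro i hi
    rw [natDegree_mul (sig_ne_zero hp (mem_support_iff.mp hi)) (pow_ne_zero _ X_ne_zero),
      natDegree_X_pow, sig_natDegree hp, hd]
    ring
  have hco : (eval₂ (sig K p) Polynomial.X r).coeff (d i₀) ≠ 0 := by
    rw [eval₂_eq_sum, Polynomial.sum_def, finset_sum_coeff]
    rw [Finset.sum_eq_single_of_mem i₀ hi₀]
    · have : d i₀ = (sig K p (r.coeff i₀)).natDegree + i₀ := by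
        rw [sig_natDegree hp, hd]; ring
      rw [this, coeff_mul_X_pow, ← leadingCoeff, sig_leadingCoeff hp]
      exact leadingCoeff_ne_zero.mpr (mem_support_iff.mp hi₀)
    · intro i hi hne
      apply coeff_eq_zero_of_natDegree_lt
      rw [hterm i hi]
      rcases lt_or_eq_of_le (hmax i hi) with h' | h'
      · exact h'
      · exfalso
        apply hne
        have h1 : d i % p = i := by
          rw [hd]; simp [Nat.add_mul_mod_self_right, Nat.mod_eq_of_lt (hlt i hi)]
        have h2 : d i₀ % p = i₀ := by
          rw [hd]; simp [Nat.add_mul_mod_self_right, Nat.mod_eq_of_lt (hlt i₀ hi₀)]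
        rw [← h1, h', h2]
  rw [h] at hco
  exact hco rfl


variable (K p)

lemma sig_X : sig K p Polynomial.X = srcf K p := by
  simp [sig, srcf]

lemma sig_C (a : K) : sig K p (C a) = C a := by
  simp [sig, Polynomial.algebraMap_eq]

lemma hTT : aeval (toT K p Polynomial.X) (q K p) = 0 := by
  rw [q, map_sub, map_sub, map_pow, aeval_X, aeval_C, algebraMap_apply,
    ← map_pow, ← map_sub, ← map_sub]
  rw [aeval_X]
  simp

/-- The evaluation map `K[T][X]/(q) → K[T]` sending `X ↦ T`. -/
def ev : AdjoinRoot (q K p) →ₐ[Polynomial K] Target K p :=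
  AdjoinRoot.liftAlgHom (q K p) (Algebra.ofId _ _) (toT K p Polynomial.X)
    (by rw [Algebra.toRingHom_ofId, ← aeval_def]; exact hTT K p)

lemma ev_mk (g : (Polynomial K)[X]) :
    ev K p (AdjoinRoot.mk (q K p) g) = toT K p (eval₂ (sig K p) Polynomial.X g) := by
  rw [ev, AdjoinRoot.liftAlgHom_mk]
  rfl

lemma ev_surjective : Function.Surjective (ev K p) := by
  intro s
  obtain ⟨t, rfl⟩ := (toT K p).surjective s
  induction t using Polynomial.induction_on' with
  | add a b ha hb =>
      obtain ⟨x, hx⟩ := ha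
      obtain ⟨y, hy⟩ := hb
      exact ⟨x + y, by rw [map_add, hx, hy, ← map_add]⟩
  | monomial n a =>
      refine ⟨AdjoinRoot.mk _ (C (C a) * Polynomial.X ^ n), ?_⟩
      rw [ev_mk, eval₂_mul, eval₂_C, eval₂_X_pow, sig_C, C_mul_X_pow_eq_monomial]

lemma eval₂_sig_q : eval₂ (sig K p) Polynomial.X (q K p) = 0 := by
  rw [q, eval₂_sub, eval₂_sub, eval₂_pow, eval₂_X, eval₂_C, sig_X, srcf]
  ring

variable {K p}

lemma ev_injective (hp : 1 < p) : Function.Injective (ev K p) := by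
  rw [injective_iff_map_eq_zero]
  intro a ha
  obtain ⟨g, rfl⟩ := AdjoinRoot.mk_surjective a
  rw [ev_mk] at ha
  have h0 : eval₂ (sig K p) Polynomial.X g = 0 := by
    apply (toT K p).injective
    rw [ha, map_zero]
  have hq := q_monic (K := K) hp
  have hmod : eval₂ (sig K p) Polynomial.X (g %ₘ q K p) = 0 := by
    have hg := modByMonic_add_div g (q K p)
    have := congrArg (eval₂ (sig K p) Polynomial.X) hg
    rw [eval₂_add, eval₂_mul, eval₂_sig_q, zero_mul, add_zero] at this
    rw [this, h0]
  have hzero : g %ₘ q K p = 0 := by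
    by_cases h0' : g %ₘ q K p = 0
    · exact h0'
    · refine key hp _ ?_ hmod
      rw [natDegree_lt_iff_degree_lt h0']
      have h2 := degree_modByMonic_lt g hq
      have h3 : (q K p).degree = (p : WithBot ℕ) := by
        rw [q_eq, degree_sub_eq_left_of_degree_lt (deg_lin hp), degree_X_pow]
      rwa [h3] at h2
  rw [AdjoinRoot.mk_eq_zero]
  exact (modByMonic_eq_zero_iff_dvd hq).mp hzero

/-- The algebra isomorphism `K[T][X]/(q) ≃ K[T]`. -/
def eqv (hp : 1 < p) : AdjoinRoot (q K p) ≃ₐ[Polynomial K] Target K p :=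
  AlgEquiv.ofBijective (ev K p) ⟨ev_injective hp, ev_surjective K p⟩


variable (K p)

lemma q_derivative [CharP K p] : derivative (q K p) = -1 := by
  have hpz : ((p : ℕ) : Polynomial K) = 0 := by
    rw [← map_natCast (C : K →+* Polynomial K), CharP.cast_eq_zero, map_zero]
  rw [q, derivative_sub, derivative_sub, derivative_X_pow, derivative_X, derivative_C]
  rw [hpz]
  simp

lemma aeval_q_add_eps [CharP K p] {B : Type} [CommRing B] [Algebra (Polynomial K) B]
    (x ε : B) (hε : ε * ε = 0) :
    aeval (x + ε) (q K p) = aeval x (q K p) - ε := by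
  obtain ⟨k, hk⟩ := Polynomial.binomExpansion ((q K p).map (algebraMap (Polynomial K) B)) x ε
  have hev : ∀ y : B, aeval y (q K p) =
      Polynomial.eval y ((q K p).map (algebraMap (Polynomial K) B)) := fun y => by
    rw [aeval_def, eval_map]
  rw [hev, hev, hk, derivative_map, q_derivative]
  have h1 : ((-1 : (Polynomial K)[X]).map (algebraMap (Polynomial K) B)) = -1 := by
    simp
  rw [h1]
  have h2 : k * ε ^ 2 = 0 := by rw [pow_two, hε, mul_zero]
  rw [h2]
  simp [sub_eq_add_neg]

lemma sq_zero_of_mem {B : Type} [CommRing B] {I : Ideal B} (hI : I ^ 2 = ⊥)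
    {ε : B} (hε : ε ∈ I) : ε * ε = 0 := by
  have : ε * ε ∈ I ^ 2 := by rw [sq]; exact Ideal.mul_mem_mul hε hε
  rwa [hI, Ideal.mem_bot] at this

theorem formallyUnramified [CharP K p] :
    Algebra.FormallyUnramified (Polynomial K) (AdjoinRoot (q K p)) := by
  rw [Algebra.FormallyUnramified.iff_comp_injective]
  intro B _ _ I hI f₁ f₂ hf
  set x₁ := f₁ (AdjoinRoot.root (q K p)) with hx₁
  set x₂ := f₂ (AdjoinRoot.root (q K p)) with hx₂
  have hroot : Ideal.Quotient.mk I x₁ = Ideal.Quotient.mk I x₂ := by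
    have := AlgHom.congr_fun hf (AdjoinRoot.root (q K p))
    simpa using this
  have hεI : x₁ - x₂ ∈ I := by
    rw [← Ideal.Quotient.eq_zero_iff_mem, map_sub, hroot, sub_self]
  have hε2 : (x₁ - x₂) * (x₁ - x₂) = 0 := sq_zero_of_mem hI hεI
  have h1 : aeval x₁ (q K p) = 0 := AdjoinRoot.aeval_algHom_eq_zero (q K p) f₁
  have h2 : aeval x₂ (q K p) = 0 := AdjoinRoot.aeval_algHom_eq_zero (q K p) f₂
  have h3 : x₁ = x₂ + (x₁ - x₂) := by ring
  have h4 : aeval x₂ (q K p) - (x₁ - x₂) = 0 := by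
    rw [← aeval_q_add_eps K p x₂ (x₁ - x₂) hε2, ← h3, h1]
  have h5 : x₁ = x₂ := by
    rw [h2, zero_sub, neg_eq_zero, sub_eq_zero] at h4
    exact h4
  exact AdjoinRoot.algHom_ext h5

theorem formallySmooth [CharP K p] :
    Algebra.FormallySmooth (Polynomial K) (AdjoinRoot (q K p)) := by
  rw [Algebra.FormallySmooth.iff_comp_surjective]
  intro B _ _ I hI φ
  obtain ⟨b₀, hb₀⟩ := Ideal.Quotient.mk_surjective (φ (AdjoinRoot.root (q K p)))
  set ε := aeval b₀ (q K p) with hε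
  have hεI : ε ∈ I := by
    rw [← Ideal.Quotient.eq_zero_iff_mem]
    have h1 : Ideal.Quotient.mk I ε = aeval (Ideal.Quotient.mk I b₀) (q K p) := by
      rw [hε]
      exact (Polynomial.aeval_algHom_apply (Ideal.Quotient.mkₐ (Polynomial K) I) b₀ (q K p)).symm
    rw [h1, hb₀]
    exact AdjoinRoot.aeval_algHom_eq_zero (q K p) φ
  have hε2 : ε * ε = 0 := sq_zero_of_mem hI hεI
  have hroot : aeval (b₀ + ε) (q K p) = 0 := by
    rw [aeval_q_add_eps K p b₀ ε hε2, ← hε, sub_self]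
  have hroot' : eval₂ (↑(Algebra.ofId (Polynomial K) B)) (b₀ + ε) (q K p) = 0 := by
    rw [Algebra.toRingHom_ofId, ← aeval_def]; exact hroot
  refine ⟨AdjoinRoot.liftAlgHom (q K p) (Algebra.ofId _ _) (b₀ + ε) hroot', ?_⟩
  apply AdjoinRoot.algHom_ext
  show Ideal.Quotient.mkₐ (Polynomial K) I (AdjoinRoot.liftAlgHom (q K p) (Algebra.ofId _ _) (b₀ + ε) hroot'
    (AdjoinRoot.root (q K p))) = φ (AdjoinRoot.root (q K p))
  rw [AdjoinRoot.liftAlgHom_root]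
  have : Ideal.Quotient.mk I ε = 0 := Ideal.Quotient.eq_zero_iff_mem.mpr hεI
  show Ideal.Quotient.mk I (b₀ + ε) = _
  rw [map_add, this, add_zero, hb₀]

variable {K p}

set_option maxHeartbeats 1600000 in
theorem target_free (hp : 1 < p) : Module.Free (Polynomial K) (Target K p) :=
  Module.Free.of_basis ((AdjoinRoot.powerBasis' (q_monic hp)).basis.map (eqv hp).toLinearEquiv)

set_option maxHeartbeats 1600000 in
theorem target_finrank (hp : 1 < p) : Module.finrank (Polynomial K) (Target K p) = p := by
  rw [Module.finrank_eq_card_basis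
    ((AdjoinRoot.powerBasis' (q_monic hp)).basis.map (eqv hp).toLinearEquiv)]
  simp [q_natDegree hp]

theorem target_fp (hp : 1 < p) :
    Algebra.FinitePresentation (Polynomial K) (Target K p) := by
  have : Algebra.FinitePresentation (Polynomial K) (AdjoinRoot (q K p)) := AdjoinRoot.finitePresentation (q K p)
  exact Algebra.FinitePresentation.equiv (eqv hp)

theorem target_flat (hp : 1 < p) : Module.Flat (Polynomial K) (Target K p) := by
  have := target_free (K := K) hp
  infer_instance

theorem target_etale [CharP K p] (hp : 1 < p) :
    Algebra.FormallyEtale (Polynomial K) (Target K p) := by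
  have h : Algebra.FormallyEtale (Polynomial K) (AdjoinRoot (q K p)) :=
    Algebra.FormallyEtale.iff_formallyUnramified_and_formallySmooth.mpr
      ⟨formallyUnramified K p, formallySmooth K p⟩
  exact Algebra.FormallyEtale.of_equiv (eqv hp)

end AS9
end AS9


/-- Let `K` be a field of characteristic `p > 0`, and `σ : K[T] → K[T]` the
`K`-algebra homomorphism with `σ(T) = T^p − T`. Then `K[T]`, regarded as an algebra over
`K[T]` via `σ`, is a free module of rank `p`, and this algebra is étale over `K[T]`:
it is of finite presentation, flat, and formally étale. -/
theorem stmt_9 (K : Type) [Field K] (p : ℕ) (hp : p.Prime) [CharP K p] :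
    let alg : Algebra (Polynomial K) (Polynomial K) :=
      ((Polynomial.aeval (R := K) (Polynomial.X ^ p - Polynomial.X)).toRingHom).toAlgebra
    let mod : Module (Polynomial K) (Polynomial K) :=
      @Algebra.toModule (Polynomial K) (Polynomial K) _ _ alg
    @Module.Free (Polynomial K) (Polynomial K) _ _ mod ∧
    @Module.finrank (Polynomial K) (Polynomial K) _ _ mod = p ∧
    @Algebra.FinitePresentation (Polynomial K) (Polynomial K) _ _ alg ∧
    @Module.Flat (Polynomial K) (Polynomial K) _ _ mod ∧
    @Algebra.FormallyEtale (Polynomial K) (Polynomial K) _ _ alg := by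
  intro alg mod
  have hp1 : 1 < p := hp.one_lt
  exact ⟨AS9.target_free hp1, AS9.target_finrank hp1, AS9.target_fp hp1,
    AS9.target_flat hp1, AS9.target_etale hp1⟩
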